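/- Let l, m be natural numbers with m ≤ l and m ≡ 0 (mod 4). If H_l^m(−2) ≡ 0 (mod 8), then l ≡ 2 (mod 8). -/

import Mathlib

/-- The coefficient `σ_l^m(k)` of the Holt–Ille polynomial `H_l^m`. -/
def sigmaLM (l m k : ℕ) : ℚ :=
  if (l + m) % 2 = 0 then
    (-2 : ℚ) ^ k * (((l - m) / 2).choose k : ℚ) * (((l + m) / 2).choose k : ℚ) /
      (((2 * k).choose k : ℚ))
  else
    (-2 : ℚ) ^ k * (((l - m) / 2).choose k : ℚ) * (((l + m) / 2).choose k : ℚ) /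
      ((((2 * k).choose k : ℚ)) * (2 * (k : ℚ) + 1))

/-- The value `H_l^m(−2) = Σ_{k=0}^{⌊(l−m)/2⌋} σ_l^m(k)`. -/
def HLM (l m : ℕ) : ℚ := ∑ k ∈ Finset.range ((l - m) / 2 + 1), sigmaLM l m k

/-- `a ≡ b (mod 2^N)` for rationals (with odd denominators), expressed via the 2-adic
norm on `ℚ₂`: it means `‖a − b‖₂ ≤ 2^(−N)`. -/
def Cong2 (a b : ℚ) (N : ℕ) : Prop :=
  ‖((a - b : ℚ) : ℚ_[2])‖ ≤ (2 : ℝ) ^ (-(N : ℤ))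

/-!
Write `a = (l - m) / 2` and `b = (l + m) / 2`. Since `C(2k, k) k! = 2^k (2k - 1)‼`, the term
`σ_l^m(k)` is `(-1)^k k! C(a, k) C(b, k)` divided by an odd integer, so it vanishes mod 8 for
`k ≥ 4`, and `H_l^m(-2)` is congruent mod 8 to an integer polynomial in the `C(a, j)`, `C(b, j)`,
`j ≤ 3`, up to an odd factor. These binomial coefficients are 16-periodic mod 8, and `m ≡ 0 mod 4`
means `a ≡ b mod 4`, so a finite check over `a, b mod 16` shows that the polynomial vanishes mod 8
only if `l + m` is even and `l = a + b ≡ 2 mod 8`.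
-/

open Finset
open scoped Nat

theorem natCast_choose_add_sixteen {k : ℕ} (hk : k ≤ 3) (a : ℕ) :
    (((a + 16).choose k : ℕ) : ZMod 8) = a.choose k := by
  rw [Nat.add_choose_eq, Nat.cast_sum, Finset.sum_eq_single (k, 0) _ (by simp)]
  · simp
  rintro ⟨i, j⟩ hij hne
  have hj : 1 ≤ j ∧ j ≤ 3 := by
    rw [HasAntidiagonal.mem_antidiagonal] at hij
    simp only [ne_eq, Prod.mk.injEq] at hne
    omega
  obtain ⟨hj1, hj3⟩ := hj
  have h16 : ((Nat.choose 16 j : ℕ) : ZMod 8) = 0 := by interval_cases j <;> decide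
  simp [h16]

theorem natCast_choose_mod_sixteen {k : ℕ} (hk : k ≤ 3) (a : ℕ) :
    (((a % 16).choose k : ℕ) : ZMod 8) = a.choose k :=
  Function.Periodic.map_mod_nat (f := fun a ↦ ((a.choose k : ℕ) : ZMod 8))
    (natCast_choose_add_sixteen hk) a

theorem odd_doubleFactorial_two_mul_sub_one (k : ℕ) : Odd (2 * k - 1)‼ := by
  induction k with
  | zero => decide
  | succ k ih =>
    rw [show 2 * (k + 1) - 1 = 2 * k + 1 by omega, Nat.doubleFactorial_add_one]
    exact (odd_two_mul_add_one k).mul ih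

theorem choose_two_mul_mul_factorial (k : ℕ) : (2 * k).choose k * k ! = 2 ^ k * (2 * k - 1)‼ := by
  rcases k with _ | k
  · rfl
  apply Nat.eq_of_mul_eq_mul_right (Nat.factorial_pos (k + 1))
  calc (2 * (k + 1)).choose (k + 1) * (k + 1)! * (k + 1)! = (2 * (k + 1))! := by
        simpa [two_mul] using Nat.add_choose_mul_factorial_mul_factorial (k + 1) (k + 1)
    _ = 2 ^ (k + 1) * (2 * (k + 1) - 1)‼ * (k + 1)! := by
        rw [show 2 * (k + 1) = (2 * k + 1) + 1 by ring, Nat.factorial_eq_mul_doubleFactorial,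
          show (2 * k + 1) + 1 = 2 * (k + 1) by ring, Nat.doubleFactorial_two_mul,
          show 2 * (k + 1) - 1 = 2 * k + 1 by omega]
        ring

theorem neg_two_pow_div_choose_two_mul (k : ℕ) :
    (-2 : ℚ) ^ k / (2 * k).choose k = (-1) ^ k * k ! / (2 * k - 1)‼ := by
  have h := choose_two_mul_mul_factorial k
  have hC : ((2 * k).choose k : ℚ) ≠ 0 := by exact_mod_cast (Nat.choose_pos (by omega)).ne'
  have hD : ((2 * k - 1)‼ : ℚ) ≠ 0 := by exact_mod_cast (Nat.doubleFactorial_pos _).ne'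
  have hq : ((2 * k).choose k : ℚ) * k ! = 2 ^ k * (2 * k - 1)‼ := by exact_mod_cast h
  rw [div_eq_div_iff hC hD, neg_pow]
  linear_combination (-(-1 : ℚ) ^ k) * hq

theorem padicNorm_intCast_div_of_not_dvd {p : ℕ} [Fact p.Prime] (z : ℤ) {d : ℤ}
    (hd : ¬ (p : ℤ) ∣ d) : padicNorm p ((z : ℚ) / d) = padicNorm p z := by
  rw [padicNorm.div, (padicNorm.int_eq_one_iff d).2 hd, div_one]

theorem pow_dvd_of_padicNorm_intCast_div_le {p n : ℕ} [Fact p.Prime] {z d : ℤ}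
    (hd : ¬ (p : ℤ) ∣ d) (h : padicNorm p ((z : ℚ) / d) ≤ (p : ℚ) ^ (-n : ℤ)) :
    ((p ^ n : ℕ) : ℤ) ∣ z := by
  rw [padicNorm_intCast_div_of_not_dvd z hd] at h
  exact padicNorm.dvd_iff_norm_le.2 h

theorem cong2_zero_iff (x : ℚ) (N : ℕ) : Cong2 x 0 N ↔ padicNorm 2 x ≤ 2 ^ (-(N : ℤ)) := by
  rw [Cong2, sub_zero, Padic.eq_padicNorm, ← Rat.cast_le (K := ℝ)]
  push_cast
  rfl

theorem sigmaLM_eq_intCast_div (l m k : ℕ) : ∃ d : ℤ, Odd d ∧ sigmaLM l m k =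
    (((-1) ^ k * k ! * ((l - m) / 2).choose k * ((l + m) / 2).choose k : ℤ) : ℚ) / d := by
  have hD : Odd ((2 * k - 1)‼ : ℤ) := by exact_mod_cast odd_doubleFactorial_two_mul_sub_one k
  have key := neg_two_pow_div_choose_two_mul k
  unfold sigmaLM
  split_ifs
  · refine ⟨(2 * k - 1)‼, hD, ?_⟩
    calc _ = (-2 : ℚ) ^ k / (2 * k).choose k * ((l - m) / 2).choose k * ((l + m) / 2).choose k := by
          ring
      _ = _ := by rw [key]; push_cast; ring
  · refine ⟨(2 * k - 1)‼ * (2 * k + 1), hD.mul (odd_two_mul_add_one _), ?_⟩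
    calc _ = (-2 : ℚ) ^ k / (2 * k).choose k * ((l - m) / 2).choose k * ((l + m) / 2).choose k
          / (2 * k + 1) := by rw [div_mul_eq_div_div]; ring
      _ = _ := by rw [key]; push_cast; rw [mul_comm _ (2 * (k : ℚ) + 1), ← div_div]; ring

theorem padicNorm_sigmaLM_le (l m : ℕ) {k : ℕ} (hk : 4 ≤ k) :
    padicNorm 2 (sigmaLM l m k) ≤ 2 ^ (-3 : ℤ) := by
  obtain ⟨d, hd, hσ⟩ := sigmaLM_eq_intCast_div l m k
  have hd2 : ¬ ((2 : ℕ) : ℤ) ∣ d := by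
    rwa [Nat.cast_ofNat, ← even_iff_two_dvd, Int.not_even_iff_odd]
  have h8 : ((2 ^ 3 : ℕ) : ℤ) ∣ (-1) ^ k * k ! * ((l - m) / 2).choose k * ((l + m) / 2).choose k :=
    ((Int.natCast_dvd_natCast.2 ((by decide : 2 ^ 3 ∣ 4 !).trans
      (Nat.factorial_dvd_factorial hk))).mul_left _).mul_right _ |>.mul_right _
  rw [hσ, padicNorm_intCast_div_of_not_dvd _ hd2]
  exact_mod_cast padicNorm.dvd_iff_norm_le.1 h8

theorem sigmaLM_eq_zero_of_lt {l m k : ℕ} (h : (l - m) / 2 < k) : sigmaLM l m k = 0 := by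
  simp [sigmaLM, Nat.choose_eq_zero_of_lt h]

theorem HLM_eq_sum_range_four_add (l m : ℕ) :
    HLM l m = ∑ k ∈ range 4, sigmaLM l m k + ∑ k ∈ range ((l - m) / 2), sigmaLM l m (4 + k) := by
  rw [← Finset.sum_range_add, HLM]
  refine Finset.sum_subset (range_subset_range.2 (by omega)) fun k _ hk ↦ ?_
  exact sigmaLM_eq_zero_of_lt (by simpa using hk)

theorem padicNorm_HLM_sub_sum_range_four_le (l m : ℕ) :
    padicNorm 2 (HLM l m - ∑ k ∈ range 4, sigmaLM l m k) ≤ 2 ^ (-3 : ℤ) := by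
  rw [HLM_eq_sum_range_four_add, add_sub_cancel_left]
  exact padicNorm.sum_le' (fun k _ ↦ padicNorm_sigmaLM_le l m (by omega)) (by positivity)

def headNum (c : Fin 4 → ℤ) (a b : ℕ) : ℤ := ∑ k : Fin 4, c k * a.choose k * b.choose k

theorem intCast_headNum_mod_sixteen (c : Fin 4 → ℤ) (a b : ℕ) :
    (headNum c (a % 16) (b % 16) : ZMod 8) = headNum c a b := by
  simp only [headNum, Int.cast_sum, Int.cast_mul, Int.cast_natCast]
  refine Finset.sum_congr rfl fun k _ ↦ ?_
  rw [natCast_choose_mod_sixteen (by omega), natCast_choose_mod_sixteen (by omega)]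

-- `15` and `105` are the lcm of the odd denominators of `σ_l^m(k)`, `k ≤ 3`.
theorem sum_range_four_sigmaLM_of_even {l m : ℕ} (h : (l + m) % 2 = 0) :
    ∑ k ∈ range 4, sigmaLM l m k =
      headNum ![15, -15, 10, -6] ((l - m) / 2) ((l + m) / 2) / (15 : ℤ) := by
  simp only [sigmaLM, h, if_true, Finset.sum_range_succ, Finset.sum_range_zero, headNum,
    Fin.sum_univ_four, Matrix.cons_val]
  generalize (l - m) / 2 = a
  generalize (l + m) / 2 = b
  norm_num [show Nat.choose 4 2 = 6 from rfl, show Nat.choose 6 3 = 20 from rfl]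
  ring

theorem sum_range_four_sigmaLM_of_odd {l m : ℕ} (h : (l + m) % 2 = 1) :
    ∑ k ∈ range 4, sigmaLM l m k =
      headNum ![105, -35, 14, -6] ((l - m) / 2) ((l + m) / 2) / (105 : ℤ) := by
  simp only [sigmaLM, h, Finset.sum_range_succ, Finset.sum_range_zero, headNum,
    Fin.sum_univ_four, Matrix.cons_val]
  generalize (l - m) / 2 = a
  generalize (l + m) / 2 = b
  norm_num [show Nat.choose 4 2 = 6 from rfl, show Nat.choose 6 3 = 20 from rfl]
  ring

theorem add_mod_eight_of_eight_dvd_headNum_even {a b : ℕ} (hab : a % 4 = b % 4)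
    (h : 8 ∣ headNum ![15, -15, 10, -6] a b) : (a + b) % 8 = 2 := by
  have key : ∀ x < 16, ∀ y < 16, x % 4 = y % 4 →
      (headNum ![15, -15, 10, -6] x y : ZMod 8) = 0 → (x + y) % 8 = 2 := by decide
  have hz : (headNum ![15, -15, 10, -6] (a % 16) (b % 16) : ZMod 8) = 0 := by
    rw [intCast_headNum_mod_sixteen, ZMod.intCast_zmod_eq_zero_iff_dvd]
    exact_mod_cast h
  have := key _ (a.mod_lt (by norm_num)) _ (b.mod_lt (by norm_num)) (by omega) hz
  omega

theorem not_eight_dvd_headNum_odd {a b : ℕ} (hab : a % 4 = b % 4) :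
    ¬ 8 ∣ headNum ![105, -35, 14, -6] a b := by
  have key : ∀ x < 16, ∀ y < 16, x % 4 = y % 4 →
      (headNum ![105, -35, 14, -6] x y : ZMod 8) ≠ 0 := by decide
  intro h
  apply key _ (a.mod_lt (by norm_num)) _ (b.mod_lt (by norm_num)) (by omega)
  rw [intCast_headNum_mod_sixteen, ZMod.intCast_zmod_eq_zero_iff_dvd]
  exact_mod_cast h

theorem l_mod_eight_of_HLM_cong_zero (l m : ℕ) (hml : m ≤ l) (hm : m % 4 = 0)
    (h : Cong2 (HLM l m) 0 3) : l % 8 = 2 := by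
  have hhead : padicNorm 2 (∑ k ∈ range 4, sigmaLM l m k) ≤ 2 ^ (-3 : ℤ) := by
    rw [cong2_zero_iff] at h
    simpa using padicNorm.sub.trans (max_le h (padicNorm_HLM_sub_sum_range_four_le l m))
  have hab : (l - m) / 2 % 4 = (l + m) / 2 % 4 := by omega
  rcases Nat.mod_two_eq_zero_or_one (l + m) with hpar | hpar
  · rw [sum_range_four_sigmaLM_of_even hpar] at hhead
    have := add_mod_eight_of_eight_dvd_headNum_even hab
      (pow_dvd_of_padicNorm_intCast_div_le (n := 3) (by decide) hhead)
    omega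
  · rw [sum_range_four_sigmaLM_of_odd hpar] at hhead
    exact absurd (pow_dvd_of_padicNorm_intCast_div_le (n := 3) (by decide) hhead)
      (not_eight_dvd_headNum_odd hab)
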